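/- arXiv:2205.08115 — 3 statements merged into one kernel-verified Lean document; each statement's English description precedes it below -/
import Mathlib

section
/- Suppose there exist τ > 0 and ε > 0 such that for all π in the polyhedral set C₁ ∩ C₂ with ||π - proj_{C₁∩C₂}(π + D_X π D_Y)|| ≤ ε, one has dist(π, 𝒳) ≤ τ ||π - proj_{C₁∩C₂}(π + D_X π D_Y)||. Then the same type of bound extends to all π ∈ R^{n×m} (with residual small enough) with the enlarged constant τ' = τ σ_max(D_X) σ_max(D_Y) + 2τ + 1, where σ_max denotes the largest singular value. -/
/-!
Let `p` be the nearest-point map onto `C` and `r(π) = ‖π - p (π + A π)‖` the natural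
residual. For an arbitrary `π`, the point `p π` is feasible, lies within `r(π)` of `π`, and
since `p` is nonexpansive its residual is at most `(2 + ‖A‖) r(π)`. Applying the error bound
on `C` at `p π` and paying `‖π - p π‖ ≤ r(π)` to move back to `π` gives the constant
`τ (2 + ‖A‖) + 1`.
-/

open scoped RealInnerProductSpace

section NearestPoint

variable {E : Type*} [NormedAddCommGroup E]

def IsNearestPointMap (C : Set E) (p : E → E) : Prop :=
  ∀ x, p x ∈ C ∧ ∀ y ∈ C, ‖x - p x‖ ≤ ‖x - y‖

namespace IsNearestPointMap

variable {C : Set E} {p : E → E}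

theorem apply_eq_self (hp : IsNearestPointMap C p) {c : E} (hc : c ∈ C) : p c = c := by
  have h := (hp c).2 c hc
  rw [sub_self, norm_zero, norm_le_zero_iff, sub_eq_zero] at h
  exact h.symm

variable [InnerProductSpace ℝ E]

theorem inner_sub_le_zero (hp : IsNearestPointMap C p) (hconv : Convex ℝ C) (x : E) {c : E}
    (hc : c ∈ C) : ⟪x - p x, c - p x⟫ ≤ 0 := by
  obtain ⟨hpx, hnearest⟩ := hp x
  have : Nonempty C := ⟨⟨p x, hpx⟩⟩
  have hinf : ‖x - p x‖ = ⨅ w : C, ‖x - w‖ :=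
    le_antisymm (le_ciInf fun w => hnearest w w.2) <|
      ciInf_le (f := fun w : C => ‖x - w‖)
        ⟨0, Set.forall_mem_range.mpr fun _ => norm_nonneg _⟩ ⟨p x, hpx⟩
  exact (norm_eq_iInf_iff_real_inner_le_zero hconv hpx).mp hinf c hc

theorem norm_sub_le (hp : IsNearestPointMap C p) (hconv : Convex ℝ C) (x y : E) :
    ‖p x - p y‖ ≤ ‖x - y‖ := by
  set d := p x - p y
  have hx : 0 ≤ ⟪x - p x, d⟫ := by
    have h := hp.inner_sub_le_zero hconv x (hp y).1
    rw [← neg_sub (p x) (p y), inner_neg_right] at h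
    linarith
  have hy : ⟪y - p y, d⟫ ≤ 0 := hp.inner_sub_le_zero hconv y (hp x).1
  have hfirm : ‖d‖ ^ 2 ≤ ⟪x - y, d⟫ := by
    have hsplit : x - y = d + (x - p x) - (y - p y) := by simp only [d]; abel
    rw [hsplit, inner_sub_left, inner_add_left, real_inner_self_eq_norm_sq]
    linarith
  nlinarith [real_inner_le_norm (x - y) d, norm_nonneg d, norm_nonneg (x - y)]

theorem norm_sub_le_of_mem (hp : IsNearestPointMap C p) (hconv : Convex ℝ C) (x : E) {c : E}
    (hc : c ∈ C) : ‖p x - c‖ ≤ ‖x - c‖ := by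
  simpa only [hp.apply_eq_self hc] using hp.norm_sub_le hconv x c

theorem residual_apply_le (hp : IsNearestPointMap C p) (hconv : Convex ℝ C) {A : E → E}
    {K : ℝ} (hK : 0 ≤ K) (hA : ∀ x y, ‖A x - A y‖ ≤ K * ‖x - y‖) (x : E) :
    ‖p x - p (p x + A (p x))‖ ≤ (2 + K) * ‖x - p (x + A x)‖ := by
  set c := p (x + A x)
  set r := ‖x - c‖
  have hxp : ‖x - p x‖ ≤ r := (hp x).2 c (hp _).1
  have hpc : ‖p x - c‖ ≤ r := hp.norm_sub_le_of_mem hconv x (hp _).1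
  have hc : ‖c - p (p x + A (p x))‖ ≤ (1 + K) * r :=
    calc ‖c - p (p x + A (p x))‖ ≤ ‖(x - p x) + (A x - A (p x))‖ := by
          simpa only [add_sub_add_comm] using hp.norm_sub_le hconv (x + A x) (p x + A (p x))
      _ ≤ ‖x - p x‖ + K * ‖x - p x‖ := norm_add_le_of_le le_rfl (hA _ _)
      _ ≤ (1 + K) * r := by nlinarith
  calc ‖p x - p (p x + A (p x))‖ ≤ ‖p x - c‖ + ‖c - p (p x + A (p x))‖ :=
        norm_sub_le_norm_sub_add_norm_sub _ _ _
    _ ≤ (2 + K) * r := by linarith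

end IsNearestPointMap

end NearestPoint

theorem luo_tseng_error_bound_extension_general
    {E : Type*} [NormedAddCommGroup E] [InnerProductSpace ℝ E]
    (C X : Set E) (hconv : Convex ℝ C)
    (proj : E → E)
    (hmem : ∀ x, proj x ∈ C)
    (hnearest : ∀ x, ∀ y ∈ C, ‖x - proj x‖ ≤ ‖x - y‖)
    (A : E →ₗ[ℝ] E) (sX sY : ℝ) (hsX : 0 ≤ sX) (hsY : 0 ≤ sY)
    (hA : ∀ x : E, ‖A x‖ ≤ sX * sY * ‖x‖)
    (τ ε : ℝ) (hτ : 0 < τ) (hε : 0 < ε)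
    (hEB : ∀ π ∈ C, ‖π - proj (π + A π)‖ ≤ ε →
      Metric.infDist π X ≤ τ * ‖π - proj (π + A π)‖) :
    ∃ ε' > 0, ∀ π : E, ‖π - proj (π + A π)‖ ≤ ε' →
      Metric.infDist π X ≤ (τ * sX * sY + 2 * τ + 1) * ‖π - proj (π + A π)‖ := by
  have hp : IsNearestPointMap C proj := fun x => ⟨hmem x, hnearest x⟩
  have hK : 0 ≤ sX * sY := mul_nonneg hsX hsY
  have hlip : ∀ x y, ‖A x - A y‖ ≤ sX * sY * ‖x - y‖ := fun x y => by
    simpa only [map_sub] using hA (x - y)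
  have hs : 0 < 2 + sX * sY := by linarith
  refine ⟨ε / (2 + sX * sY), div_pos hε hs, fun π hr => ?_⟩
  set r := ‖π - proj (π + A π)‖
  have hres := hp.residual_apply_le hconv hK hlip π
  have hsmall : (2 + sX * sY) * r ≤ ε := (le_div_iff₀' hs).mp hr
  have hclose : dist π (proj π) ≤ r := by
    rw [dist_eq_norm]; exact hnearest π _ (hmem _)
  calc Metric.infDist π X ≤ Metric.infDist (proj π) X + dist π (proj π) :=
        Metric.infDist_le_infDist_add_dist
    _ ≤ τ * ((2 + sX * sY) * r) + r := by
        gcongr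
        exact (hEB _ (hmem π) (hres.trans hsmall)).trans (by gcongr)
    _ = (τ * sX * sY + 2 * τ + 1) * r := by ring

/-- Extension of the Luo–Tseng error bound from the feasible set `C = C₁ ∩ C₂` to the
whole space, with the enlarged constant `τ σ_max(D_X) σ_max(D_Y) + 2τ + 1`.
Here `A` is the linear map `π ↦ D_X π D_Y` (with operator norm at most `sX * sY`,
the product of the largest singular values), `proj` is the Euclidean projection
onto `C`, and `X` is the critical point set of the GW problem. -/
theorem luo_tseng_error_bound_extension
    {E : Type*} [NormedAddCommGroup E] [InnerProductSpace ℝ E] [FiniteDimensional ℝ E]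
    (C X : Set E) (hne : C.Nonempty) (hcl : IsClosed C) (hconv : Convex ℝ C)
    (proj : E → E)
    (hmem : ∀ x, proj x ∈ C)
    (hnearest : ∀ x, ∀ y ∈ C, ‖x - proj x‖ ≤ ‖x - y‖)
    (A : E →ₗ[ℝ] E) (sX sY : ℝ) (hsX : 0 ≤ sX) (hsY : 0 ≤ sY)
    (hA : ∀ x : E, ‖A x‖ ≤ sX * sY * ‖x‖)
    (τ ε : ℝ) (hτ : 0 < τ) (hε : 0 < ε)
    (hEB : ∀ π ∈ C, ‖π - proj (π + A π)‖ ≤ ε →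
      Metric.infDist π X ≤ τ * ‖π - proj (π + A π)‖) :
    ∃ ε' > 0, ∀ π : E, ‖π - proj (π + A π)‖ ≤ ε' →
      Metric.infDist π X ≤ (τ * sX * sY + 2 * τ + 1) * ‖π - proj (π + A π)‖ :=
  luo_tseng_error_bound_extension_general C X hconv proj hmem hnearest A sX sY hsX hsY hA τ ε hτ hε
    hEB
end

section
/- Sufficient decrease of BAPG: Let {(πᵏ, wᵏ)} be generated by the BAPG updates πᵏ⁺¹ = argmin_{π∈C₁} {f(π, wᵏ) + ρ D_h(π, wᵏ)} and wᵏ⁺¹ = argmin_{w∈C₂} {f(πᵏ⁺¹, w) + ρ D_h(w, πᵏ⁺¹)}, where f(π, w) = -Tr(D_X π D_Y wᵀ) is bilinear and D_h is symmetric along the sequence. Then the potential F_ρ(π, w) = f(π, w) + 1_{C₁}(π) + 1_{C₂}(w) + ρ D_h(π, w) satisfies F_ρ(πᵏ⁺¹, wᵏ⁺¹) - F_ρ(πᵏ, wᵏ) ≤ -ρ D_h(πᵏ, πᵏ⁺¹) - ρ D_h(wᵏ, wᵏ⁺¹). -/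
open scoped RealInnerProductSpace

/-!
Each BAPG half-step is a Bregman proximal step of a linear function over a convex set. Its
first-order optimality condition, rewritten with the three-point identity of `D_h`, gives the
three-point inequality `L x + ρ D(x, p) + ρ D(z, x) ≤ L z + ρ D(z, p)` against every feasible `z`.
Testing the `π`-step against `πᵏ` and the `w`-step against `wᵏ`, the bilinear terms
`f(πᵏ⁺¹, wᵏ)` cancel, and the symmetry of `D_h` along the iterates matches the divergence terms.
-/

open InnerProductSpace

section Bregman

variable {E : Type*} [NormedAddCommGroup E] [InnerProductSpace ℝ E]
  {h : E → ℝ} {h' : E → E} {Dh : E → E → ℝ}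

theorem bregman_three_point (hDh : ∀ x y, Dh x y = h x - h y - ⟪h' y, x - y⟫) (x y z : E) :
    Dh z y - Dh z x - Dh x y = ⟪h' x - h' y, z - x⟫ := by
  simp only [hDh, inner_sub_left, inner_sub_right]
  ring

variable [CompleteSpace E]

theorem hasFDerivAt_bregman_left (hDh : ∀ x y, Dh x y = h x - h y - ⟪h' y, x - y⟫)
    (hdiff : ∀ x, HasGradientAt h (h' x) x) (p x : E) :
    HasFDerivAt (fun u => Dh u p) (toDual ℝ E (h' x - h' p)) x := by
  simp only [hDh, map_sub]
  have hlin : HasFDerivAt (fun u => ⟪h' p, u - p⟫) (toDual ℝ E (h' p)) x := by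
    simpa only [toDual_apply_apply, inner_sub_right] using
      (toDual ℝ E (h' p)).hasFDerivAt.sub_const ⟪h' p, p⟫
  exact ((hdiff x).hasFDerivAt.sub_const (h p)).sub hlin

theorem bregman_prox_le (hDh : ∀ x y, Dh x y = h x - h y - ⟪h' y, x - y⟫)
    (hdiff : ∀ x, HasGradientAt h (h' x) x) {C : Set E} (hC : Convex ℝ C) (L : E →L[ℝ] ℝ)
    (ρ : ℝ) {x z p : E} (hx : x ∈ C) (hz : z ∈ C)
    (hmin : ∀ u ∈ C, L x + ρ * Dh x p ≤ L u + ρ * Dh u p) :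
    L x + ρ * Dh x p + ρ * Dh z x ≤ L z + ρ * Dh z p := by
  have hderiv : HasFDerivAt (fun u => L u + ρ * Dh u p) (L + ρ • toDual ℝ E (h' x - h' p)) x :=
    L.hasFDerivAt.add ((hasFDerivAt_bregman_left hDh hdiff p x).const_mul ρ)
  have hVI : 0 ≤ L (z - x) + ρ * ⟪h' x - h' p, z - x⟫ := by
    simpa [inner_sub_left] using
      (isMinOn_iff.mpr hmin).localize.hasFDerivWithinAt_nonneg hderiv.hasFDerivWithinAt
        (sub_mem_posTangentConeAt_of_segment_subset (hC.segment_subset hx hz))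
  rw [← bregman_three_point hDh, map_sub] at hVI
  linarith

end Bregman

theorem bapg_sufficient_decrease_general
    {E : Type*} [NormedAddCommGroup E] [InnerProductSpace ℝ E] [FiniteDimensional ℝ E]
    (C₁ C₂ : Set E) (hC₁ : Convex ℝ C₁) (hC₂ : Convex ℝ C₂)
    (B : E →ₗ[ℝ] E →ₗ[ℝ] ℝ)
    (h : E → ℝ) (h' : E → E)
    (hdiff : ∀ x, HasGradientAt h (h' x) x)
    (Dh : E → E → ℝ)
    (hDh : ∀ x y, Dh x y = h x - h y - ⟪h' y, x - y⟫)
    (ρ : ℝ)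
    (π w : ℕ → E) (k : ℕ)
    (hπmem : ∀ j, π j ∈ C₁) (hwmem : ∀ j, w j ∈ C₂)
    (hsym : ∀ i j, Dh (π i) (w j) = Dh (w j) (π i))
    (hπopt : ∀ z ∈ C₁,
      B (π (k + 1)) (w k) + ρ * Dh (π (k + 1)) (w k) ≤ B z (w k) + ρ * Dh z (w k))
    (hwopt : ∀ z ∈ C₂,
      B (π (k + 1)) (w (k + 1)) + ρ * Dh (w (k + 1)) (π (k + 1))
        ≤ B (π (k + 1)) z + ρ * Dh z (π (k + 1))) :
    (B (π (k + 1)) (w (k + 1)) + ρ * Dh (π (k + 1)) (w (k + 1)))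
        - (B (π k) (w k) + ρ * Dh (π k) (w k))
      ≤ -(ρ * Dh (π k) (π (k + 1))) - ρ * Dh (w k) (w (k + 1)) := by
  have hπ := bregman_prox_le hDh hdiff hC₁ (B.flip (w k)).toContinuousLinearMap ρ
    (hπmem (k + 1)) (hπmem k) (by simpa using hπopt)
  have hw := bregman_prox_le hDh hdiff hC₂ (B (π (k + 1))).toContinuousLinearMap ρ
    (hwmem (k + 1)) (hwmem k) (by simpa using hwopt)
  simp only [LinearMap.coe_toContinuousLinearMap', LinearMap.flip_apply] at hπ hw
  rw [hsym] at hπ ⊢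
  linarith

/-- Sufficient decrease of BAPG: for the bilinear coupling `f(π, w) = B π w`
(`f(π, w) = -Tr(D_X π D_Y wᵀ)`) and a Bregman divergence `D_h` that is symmetric
along the sequence, the iterates defined by the alternating Bregman minimization
satisfy
`F_ρ(πᵏ⁺¹, wᵏ⁺¹) - F_ρ(πᵏ, wᵏ) ≤ -ρ D_h(πᵏ, πᵏ⁺¹) - ρ D_h(wᵏ, wᵏ⁺¹)`,
where `F_ρ(π, w) = f(π, w) + ρ D_h(π, w)` on the feasible iterates
(the indicator terms vanish since `πᵏ ∈ C₁` and `wᵏ ∈ C₂`). -/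
theorem bapg_sufficient_decrease
    {E : Type*} [NormedAddCommGroup E] [InnerProductSpace ℝ E] [FiniteDimensional ℝ E]
    (C₁ C₂ : Set E) (hC₁ : Convex ℝ C₁) (hC₂ : Convex ℝ C₂)
    (hC₁cl : IsClosed C₁) (hC₂cl : IsClosed C₂)
    (B : E →ₗ[ℝ] E →ₗ[ℝ] ℝ)
    (h : E → ℝ) (h' : E → E)
    (hconv : ConvexOn ℝ Set.univ h)
    (hdiff : ∀ x, HasGradientAt h (h' x) x)
    (Dh : E → E → ℝ)
    (hDh : ∀ x y, Dh x y = h x - h y - ⟪h' y, x - y⟫)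
    (ρ : ℝ) (hρ : 0 < ρ)
    (π w : ℕ → E) (k : ℕ)
    (hπmem : ∀ j, π j ∈ C₁) (hwmem : ∀ j, w j ∈ C₂)
    (hsym : ∀ i j, Dh (π i) (w j) = Dh (w j) (π i))
    (hπopt : ∀ z ∈ C₁,
      B (π (k + 1)) (w k) + ρ * Dh (π (k + 1)) (w k) ≤ B z (w k) + ρ * Dh z (w k))
    (hwopt : ∀ z ∈ C₂,
      B (π (k + 1)) (w (k + 1)) + ρ * Dh (w (k + 1)) (π (k + 1))
        ≤ B (π (k + 1)) z + ρ * Dh z (π (k + 1))) :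
    (B (π (k + 1)) (w (k + 1)) + ρ * Dh (π (k + 1)) (w (k + 1)))
        - (B (π k) (w k) + ρ * Dh (π k) (w k))
      ≤ -(ρ * Dh (π k) (π (k + 1))) - ρ * Dh (w k) (w (k + 1)) :=
  bapg_sufficient_decrease_general C₁ C₂ hC₁ hC₂ B h h' hdiff Dh hDh ρ π w k hπmem hwmem hsym hπopt
    hwopt
end

section
/- Infeasibility bound for BAPG fixed points: Suppose (π*, w*) with π* ∈ C₁, w* ∈ C₂ satisfies ∇f(w*) + ρ(∇h(π*) - ∇h(w*)) + p = 0 and ∇f(π*) + ρ(∇h(w*) - ∇h(π*)) + q = 0 with p ∈ N_{C₁}(π*), q ∈ N_{C₂}(w*). Assume h is σ-strongly convex, ||∇f|| ≤ L_f on the relevant bounded region, and the bounded linear regularity holds: dist(π, C₁∩C₂) ≤ κ ||π - w|| whenever π ∈ C₁, w ∈ C₂ and specifically dist(π*, C₁∩C₂) ≤ κ ||π* - w*||. Then ||π* - w*|| ≤ (2κ+1) L_f / (σ ρ). -/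
open scoped RealInnerProductSpace

/-!
Pairing the two stationarity equations with `z - π*` and `z - w*` for a point `z ∈ C₁ ∩ C₂`
and adding them, the normal-cone inequalities eliminate `p` and `q` and leave
`ρ ⟪∇h π* - ∇h w*, π* - w*⟫ ≤ ⟪∇f w*, z - π*⟫ + ⟪∇f π*, z - w*⟫`.
Strong convexity makes `∇h` strongly monotone, so the left side is at least `σ ρ ‖π* - w*‖²`,
while Cauchy–Schwarz bounds the right side by `L_f (2 ‖z - π*‖ + ‖π* - w*‖)`. Taking the
infimum over `z` and applying bounded linear regularity gives
`σ ρ ‖π* - w*‖² ≤ (2κ + 1) L_f ‖π* - w*‖`.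
-/

open Metric Set

theorem ConvexOn.add_apply_sub_le_of_hasFDerivAt {E : Type*} [NormedAddCommGroup E]
    [NormedSpace ℝ E] {s : Set E} {φ : E → ℝ} {φ' : E →L[ℝ] ℝ} {x y : E}
    (hφ : ConvexOn ℝ s φ) (hx : x ∈ s) (hy : y ∈ s) (hφx : HasFDerivAt φ φ' x) :
    φ x + φ' (y - x) ≤ φ y := by
  let ℓ : ℝ →ᵃ[ℝ] E := AffineMap.lineMap x y
  have hconv : ConvexOn ℝ (Icc 0 1) (φ ∘ ℓ) :=
    (hφ.comp_affineMap ℓ).subset (fun t ht => hφ.1.lineMap_mem hx hy ht) (convex_Icc 0 1)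
  have hderiv : HasDerivAt (φ ∘ ℓ) (φ' (y - x)) 0 := by
    simpa [ℓ] using hφx.comp_hasDerivAt_of_eq (0 : ℝ) AffineMap.hasDerivAt_lineMap (by simp)
  have := hconv.le_slope_of_hasDerivAt (by simp) (by simp) zero_lt_one hderiv
  simp only [slope_def_field, Function.comp_apply, ℓ, AffineMap.lineMap_apply_zero,
    AffineMap.lineMap_apply_one, sub_zero, div_one] at this
  linarith

theorem ConvexOn.apply_sub_le_of_hasFDerivAt {E : Type*} [NormedAddCommGroup E]
    [NormedSpace ℝ E] {s : Set E} {φ : E → ℝ} {φx' φy' : E →L[ℝ] ℝ} {x y : E}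
    (hφ : ConvexOn ℝ s φ) (hx : x ∈ s) (hy : y ∈ s) (hφx : HasFDerivAt φ φx' x)
    (hφy : HasFDerivAt φ φy' y) : φx' (y - x) ≤ φy' (y - x) := by
  have hxy := hφ.add_apply_sub_le_of_hasFDerivAt hx hy hφx
  have hyx := hφ.add_apply_sub_le_of_hasFDerivAt hy hx hφy
  rw [← neg_sub, map_neg] at hyx
  linarith

theorem ConvexOn.mul_norm_sub_sq_le_inner_sub {F : Type*} [NormedAddCommGroup F]
    [InnerProductSpace ℝ F] [CompleteSpace F] {s : Set F} {h : F → ℝ} {gx gy x y : F} {σ : ℝ}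
    (hsc : ConvexOn ℝ s (fun x => h x - σ / 2 * ‖x‖ ^ 2)) (hx : x ∈ s) (hy : y ∈ s)
    (hgx : HasGradientAt h gx x) (hgy : HasGradientAt h gy y) :
    σ * ‖x - y‖ ^ 2 ≤ ⟪gx - gy, x - y⟫ := by
  have hderiv : ∀ {z g}, HasGradientAt h g z → HasFDerivAt (fun x => h x - σ / 2 * ‖x‖ ^ 2)
      (InnerProductSpace.toDual ℝ F g - (σ / 2) • (2 • innerSL ℝ z)) z := fun hg =>
    hg.hasFDerivAt.sub ((hasStrictFDerivAt_norm_sq _).hasFDerivAt.const_smul (σ / 2))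
  have := hsc.apply_sub_le_of_hasFDerivAt hy hx (hderiv hgy) (hderiv hgx)
  simp only [sub_apply, smul_apply,
    InnerProductSpace.toDual_apply_apply, innerSL_apply_apply, smul_eq_mul, nsmul_eq_mul] at this
  rw [← real_inner_self_eq_norm_sq, inner_sub_left, inner_sub_left]
  push_cast at this
  linarith

theorem Metric.le_mul_infDist_add {α : Type*} [PseudoMetricSpace α] {s : Set α} {x : α}
    {a b c : ℝ} (hs : s.Nonempty) (hc : 0 ≤ c) (h : ∀ y ∈ s, a ≤ c * dist x y + b) :
    a ≤ c * infDist x s + b := by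
  rcases hc.eq_or_lt with rfl | hc
  · obtain ⟨y, hy⟩ := hs
    simpa using h y hy
  · have : (a - b) / c ≤ infDist x s :=
      (le_infDist hs).2 fun y hy => by rw [div_le_iff₀' hc]; linarith [h y hy]
    rw [div_le_iff₀' hc] at this
    linarith

theorem mul_inner_sub_le_of_inner_le_zero {F : Type*} [NormedAddCommGroup F]
    [InnerProductSpace ℝ F] {a b u v p q x y z : F} {ρ : ℝ}
    (hpa : a + ρ • (u - v) + p = 0) (hqb : b + ρ • (v - u) + q = 0)
    (hp : ⟪p, z - x⟫ ≤ 0) (hq : ⟪q, z - y⟫ ≤ 0) :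
    ρ * ⟪u - v, x - y⟫ ≤ ⟪a, z - x⟫ + ⟪b, z - y⟫ := by
  rw [eq_neg_of_add_eq_zero_right hpa] at hp
  rw [eq_neg_of_add_eq_zero_right hqb] at hq
  have hxy : x - y = (z - y) - (z - x) := by abel
  rw [← neg_sub u v] at hq
  simp only [inner_neg_left, inner_add_left, real_inner_smul_left, smul_neg] at hp hq
  rw [hxy, inner_sub_right]
  linarith

theorem le_div_of_mul_sq_le {a b t : ℝ} (ha : 0 < a) (hb : 0 ≤ b) (ht : 0 ≤ t)
    (h : a * t ^ 2 ≤ b * t) : t ≤ b / a := by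
  rw [le_div_iff₀' ha]
  rcases ht.eq_or_lt with rfl | ht
  · simpa using hb
  · nlinarith

theorem bapg_infeasibility_bound_general
    {E : Type*} [NormedAddCommGroup E] [InnerProductSpace ℝ E] [FiniteDimensional ℝ E]
    (C₁ C₂ : Set E)
    (hne : (C₁ ∩ C₂).Nonempty)
    (h : E → ℝ) (f' h' : E → E)
    (hhgrad : ∀ x, HasGradientAt h (h' x) x)
    (σ ρ κ Lf : ℝ) (hσ : 0 < σ) (hρ : 0 < ρ) (hκ : 0 ≤ κ)
    (hsc : ConvexOn ℝ Set.univ (fun x => h x - σ / 2 * ‖x‖ ^ 2))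
    (πs ws : E)
    (hLf1 : ‖f' πs‖ ≤ Lf) (hLf2 : ‖f' ws‖ ≤ Lf)
    (hblr : Metric.infDist πs (C₁ ∩ C₂) ≤ κ * ‖πs - ws‖)
    (p q : E)
    (hp : ∀ y ∈ C₁, ⟪p, y - πs⟫ ≤ 0)
    (hq : ∀ y ∈ C₂, ⟪q, y - ws⟫ ≤ 0)
    (heq1 : f' ws + ρ • (h' πs - h' ws) + p = 0)
    (heq2 : f' πs + ρ • (h' ws - h' πs) + q = 0) :
    ‖πs - ws‖ ≤ (2 * κ + 1) * Lf / (σ * ρ) := by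
  have hLf : 0 ≤ Lf := (norm_nonneg _).trans hLf1
  have hmono : σ * ‖πs - ws‖ ^ 2 ≤ ⟪h' πs - h' ws, πs - ws⟫ :=
    hsc.mul_norm_sub_sq_le_inner_sub trivial trivial (hhgrad πs) (hhgrad ws)
  have hgap : ∀ z ∈ C₁ ∩ C₂,
      σ * ρ * ‖πs - ws‖ ^ 2 ≤ 2 * Lf * dist πs z + Lf * ‖πs - ws‖ := by
    rintro z ⟨hz₁, hz₂⟩
    rw [dist_eq_norm']
    have hkey := mul_inner_sub_le_of_inner_le_zero heq1 heq2 (hp z hz₁) (hq z hz₂)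
    have hπz : ⟪f' ws, z - πs⟫ ≤ Lf * ‖z - πs‖ :=
      (real_inner_le_norm _ _).trans (by gcongr)
    have hwz : ⟪f' πs, z - ws⟫ ≤ Lf * (‖z - πs‖ + ‖πs - ws‖) :=
      (real_inner_le_norm _ _).trans (by gcongr; exact norm_sub_le_norm_sub_add_norm_sub _ _ _)
    linarith [mul_le_mul_of_nonneg_left hmono hρ.le]
  have hquad : σ * ρ * ‖πs - ws‖ ^ 2 ≤ (2 * κ + 1) * Lf * ‖πs - ws‖ :=
    calc σ * ρ * ‖πs - ws‖ ^ 2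
        ≤ 2 * Lf * infDist πs (C₁ ∩ C₂) + Lf * ‖πs - ws‖ :=
          le_mul_infDist_add hne (by positivity) hgap
      _ ≤ 2 * Lf * (κ * ‖πs - ws‖) + Lf * ‖πs - ws‖ := by gcongr
      _ = (2 * κ + 1) * Lf * ‖πs - ws‖ := by ring
  exact le_div_of_mul_sq_le (by positivity) (by positivity) (norm_nonneg _) hquad

/-- Infeasibility bound for BAPG fixed points: if `(π*, w*)` satisfies the
fixed-point equations with normal-cone elements `p ∈ N_{C₁}(π*)`, `q ∈ N_{C₂}(w*)`,
`h` is σ-strongly convex, `‖∇f(π*)‖, ‖∇f(w*)‖ ≤ L_f`, and the bounded linear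
regularity `dist(π*, C₁ ∩ C₂) ≤ κ ‖π* - w*‖` holds, then
`‖π* - w*‖ ≤ (2κ + 1) L_f / (σ ρ)`. -/
theorem bapg_infeasibility_bound
    {E : Type*} [NormedAddCommGroup E] [InnerProductSpace ℝ E] [FiniteDimensional ℝ E]
    (C₁ C₂ : Set E) (hC₁ : Convex ℝ C₁) (hC₂ : Convex ℝ C₂)
    (hC₁cl : IsClosed C₁) (hC₂cl : IsClosed C₂)
    (hne : (C₁ ∩ C₂).Nonempty) (hbdd : Bornology.IsBounded (C₁ ∩ C₂))
    (f h : E → ℝ) (f' h' : E → E)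
    (hfgrad : ∀ x, HasGradientAt f (f' x) x)
    (hhgrad : ∀ x, HasGradientAt h (h' x) x)
    (σ ρ κ Lf : ℝ) (hσ : 0 < σ) (hρ : 0 < ρ) (hκ : 0 ≤ κ)
    (hsc : ConvexOn ℝ Set.univ (fun x => h x - σ / 2 * ‖x‖ ^ 2))
    (πs ws : E) (hπs : πs ∈ C₁) (hws : ws ∈ C₂)
    (hLf1 : ‖f' πs‖ ≤ Lf) (hLf2 : ‖f' ws‖ ≤ Lf)
    (hblr : Metric.infDist πs (C₁ ∩ C₂) ≤ κ * ‖πs - ws‖)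
    (p q : E)
    (hp : ∀ y ∈ C₁, ⟪p, y - πs⟫ ≤ 0)
    (hq : ∀ y ∈ C₂, ⟪q, y - ws⟫ ≤ 0)
    (heq1 : f' ws + ρ • (h' πs - h' ws) + p = 0)
    (heq2 : f' πs + ρ • (h' ws - h' πs) + q = 0) :
    ‖πs - ws‖ ≤ (2 * κ + 1) * Lf / (σ * ρ) :=
  bapg_infeasibility_bound_general C₁ C₂ hne h f' h' hhgrad σ ρ κ Lf hσ hρ hκ hsc πs ws hLf1 hLf2
    hblr p q hp hq heq1 heq2
end
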